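/- arXiv:1411.2873 — 3 statements merged into one kernel-verified Lean document; each statement's English description precedes it below -/
import Mathlib

section
/- Let T be a rooted tree directed toward its root, let B be a set of back edges oriented from descendant to ancestor, and let C be a set of cross edges (edges {u,v} where neither endpoint is an ancestor of the other) each oriented from the endpoint with smaller DFS pre-order number to the endpoint with larger DFS pre-order number. Then the digraph formed by the tree arcs together with these oriented back and cross edges is acyclic. -/
/-- Tree arcs toward the root, back edges oriented from descendant to
ancestor, and cross edges oriented from smaller to larger DFS pre-order
number together form an acyclic digraph.  The DFS pre-order `pre` is
axiomatized by: parents come before children, and if `v` is not a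
descendant of `u` and `pre u < pre v`, then every descendant of `u` also
has pre-order number smaller than `pre v`. -/
theorem stmt_6 {V : Type*} [Fintype V] (d : V) (p : V → V)
    (hpd : p d = d) (hreach : ∀ v, ∃ n, p^[n] v = d)
    (pre : V → ℕ) (hinj : Function.Injective pre)
    (hparent : ∀ v, v ≠ d → pre (p v) < pre v)
    (hdfs : ∀ u x v : V, (∃ n, p^[n] x = u) → ¬ (∃ n, p^[n] v = u) →
      pre u < pre v → pre x < pre v)
    (B : Set (V × V)) (hB : ∀ e ∈ B, e.1 ≠ e.2 ∧ ∃ n, p^[n] e.1 = e.2)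
    (C : Set (V × V))
    (hC : ∀ e ∈ C, ¬ (∃ n, p^[n] e.1 = e.2) ∧ ¬ (∃ n, p^[n] e.2 = e.1) ∧
      pre e.1 < pre e.2) :
    ∀ x, ¬ Relation.TransGen
      (fun a b => (a ≠ d ∧ p a = b) ∨ (a, b) ∈ B ∨ (a, b) ∈ C) x x := by
  classical
  -- a (weak) ancestor either equals the vertex or has strictly smaller pre
  have anc : ∀ (n : ℕ) (a : V), p^[n] a = a ∨ pre (p^[n] a) < pre a := by
    intro n
    induction n with
    | zero => intro a; exact Or.inl rfl
    | succ n ih =>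
      intro a
      rw [Function.iterate_succ_apply']
      rcases ih a with h | h
      · rw [h]
        by_cases hd : a = d
        · exact Or.inl (by rw [hd, hpd])
        · exact Or.inr (hparent a hd)
      · by_cases hd : p^[n] a = d
        · rw [hd, hpd]
          exact Or.inr (by rw [← hd]; exact h)
        · exact Or.inr (lt_trans (hparent _ hd) h)
  have anc' : ∀ (n : ℕ) (a : V), p^[n] a ≠ a → pre (p^[n] a) < pre a := by
    intro n a h
    rcases anc n a with h' | h'
    · exact absurd h' h
    · exact h'
  -- the invariant along paths
  set I : V → V → Prop := fun a b =>
    ((∃ n, p^[n] a = b) ∧ pre b < pre a) ∨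
    (pre a < pre b ∧ ¬ ∃ n, p^[n] b = a) with hIdef
  set R : V → V → Prop := fun a b =>
    (a ≠ d ∧ p a = b) ∨ (a, b) ∈ B ∨ (a, b) ∈ C with hRdef
  -- every edge of R goes either to a proper ancestor, or is a cross edge
  have edge : ∀ a b, R a b →
      ((∃ k, p^[k] a = b) ∧ pre b < pre a) ∨
      (pre a < pre b ∧ (¬ ∃ n, p^[n] b = a) ∧ (¬ ∃ n, p^[n] a = b)) := by
    intro a b hab
    rcases hab with ⟨hne, hpa⟩ | hb | hc
    · exact Or.inl ⟨⟨1, by simpa using hpa⟩, by rw [← hpa]; exact hparent a hne⟩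
    · obtain ⟨hne, n, hn⟩ := hB _ hb
      refine Or.inl ⟨⟨n, hn⟩, ?_⟩
      have := anc' n a (by rw [hn]; exact hne.symm)
      rwa [hn] at this
    · obtain ⟨h1, h2, h3⟩ := hC _ hc
      exact Or.inr ⟨h3, h2, h1⟩
  have base : ∀ a b, R a b → I a b := by
    intro a b hab
    rcases edge a b hab with ⟨h1, h2⟩ | ⟨h1, h2, _⟩
    · exact Or.inl ⟨h1, h2⟩
    · exact Or.inr ⟨h1, h2⟩
  have step : ∀ a b c, I a b → R b c → I a c := by
    intro a b c hab hbc
    rcases hab with ⟨⟨n, hn⟩, hba⟩ | ⟨hab1, hab2⟩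
    · -- b is a proper ancestor of a
      rcases edge b c hbc with ⟨⟨k, hk⟩, hcb⟩ | ⟨h1, h2, h3⟩
      · -- c is an ancestor of b, hence of a
        refine Or.inl ⟨⟨k + n, ?_⟩, lt_trans hcb hba⟩
        rw [Function.iterate_add_apply, hn, hk]
      · -- cross edge out of b; a is a descendant of b
        refine Or.inr ⟨hdfs b a c ⟨n, hn⟩ h2 h1, ?_⟩
        rintro ⟨m, hm⟩
        exact h2 ⟨n + m, by rw [Function.iterate_add_apply, hm, hn]⟩
    · -- pre a < pre b and b is not a descendant of a
      rcases edge b c hbc with ⟨⟨k, hk⟩, hcb⟩ | ⟨h1, h2, h3⟩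
      · by_cases hca : ∃ m, p^[m] a = c
        · -- c is an ancestor of a
          obtain ⟨m, hm⟩ := hca
          refine Or.inl ⟨⟨m, hm⟩, ?_⟩
          have hcna : c ≠ a := fun h => hab2 ⟨k, h ▸ hk⟩
          have := anc' m a (by rw [hm]; exact hcna)
          rwa [hm] at this
        · have hac : a ≠ c := fun h => hca ⟨0, by simpa using h⟩
          have hlt : pre a < pre c := by
            rcases lt_or_gt_of_ne (fun h => hac (hinj h)) with h | h
            · exact h
            · exact absurd (hdfs c b a ⟨k, hk⟩ hca h) (lt_asymm hab1)
          refine Or.inr ⟨hlt, ?_⟩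
          rintro ⟨m, hm⟩
          exact hab2 ⟨m + k, by rw [Function.iterate_add_apply, hk, hm]⟩
      · refine Or.inr ⟨lt_trans hab1 h1, ?_⟩
        rintro ⟨m, hm⟩
        exact absurd (hdfs a c b ⟨m, hm⟩ hab2 hab1) (lt_asymm h1)
  have key : ∀ {y z : V}, Relation.TransGen R y z → I y z := by
    intro y z h
    induction h with
    | single h => exact base _ _ h
    | tail _ h ih => exact step _ _ _ ih h
  intro x hx
  have hI : I x x := key hx
  rcases hI with ⟨_, h⟩ | ⟨h, _⟩ <;> exact lt_irrefl _ h
end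

section
/- Let T be a rooted tree directed toward its root, B a set of back edges oriented from descendant to ancestor, and C a set of cross edges each oriented from the endpoint with larger DFS pre-order number to the endpoint with smaller one. Then the resulting digraph (tree arcs plus oriented B and C) is acyclic. -/
/-- Tree arcs toward the root, back edges oriented from descendant to
ancestor, and cross edges oriented from larger to smaller DFS pre-order
number together form an acyclic digraph.  The DFS pre-order `pre` is
axiomatized by: parents come before children, and if `v` is not a
descendant of `u` and `pre u < pre v`, then every descendant of `u` also
has pre-order number smaller than `pre v`. -/
theorem stmt_7 {V : Type*} [Fintype V] (d : V) (p : V → V)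
    (hpd : p d = d) (hreach : ∀ v, ∃ n, p^[n] v = d)
    (pre : V → ℕ) (hinj : Function.Injective pre)
    (hparent : ∀ v, v ≠ d → pre (p v) < pre v)
    (hdfs : ∀ u x v : V, (∃ n, p^[n] x = u) → ¬ (∃ n, p^[n] v = u) →
      pre u < pre v → pre x < pre v)
    (B : Set (V × V)) (hB : ∀ e ∈ B, e.1 ≠ e.2 ∧ ∃ n, p^[n] e.1 = e.2)
    (C : Set (V × V))
    (hC : ∀ e ∈ C, ¬ (∃ n, p^[n] e.1 = e.2) ∧ ¬ (∃ n, p^[n] e.2 = e.1) ∧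
      pre e.2 < pre e.1) :
    ∀ x, ¬ Relation.TransGen
      (fun a b => (a ≠ d ∧ p a = b) ∨ (a, b) ∈ B ∨ (a, b) ∈ C) x x := by
  have hdfix : ∀ m, p^[m] d = d := by
    intro m
    induction m with
    | zero => rfl
    | succ m ihm => rw [Function.iterate_succ_apply, hpd, ihm]
  have anc : ∀ n x u, p^[n] x = u → x ≠ u → pre u < pre x := by
    intro n
    induction n with
    | zero => intro x u h hx; exact absurd h hx
    | succ n ih =>
      intro x u h hx
      rw [Function.iterate_succ_apply] at h
      have hxd : x ≠ d := by
        rintro rfl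
        rw [hpd, hdfix n] at h
        exact hx h
      have h1 := hparent x hxd
      by_cases hpx : p x = u
      · rw [hpx] at h1; exact h1
      · exact lt_trans (ih (p x) u h hpx) h1
  have step : ∀ a b, ((a ≠ d ∧ p a = b) ∨ (a, b) ∈ B ∨ (a, b) ∈ C) →
      pre b < pre a := by
    rintro a b (⟨had, rfl⟩ | hB' | hC')
    · exact hparent a had
    · obtain ⟨hne, n, hn⟩ := hB (a, b) hB'
      exact anc n a b hn hne
    · exact (hC (a, b) hC').2.2
  have key : ∀ x y, Relation.TransGen
      (fun a b => (a ≠ d ∧ p a = b) ∨ (a, b) ∈ B ∨ (a, b) ∈ C) x y →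
      pre y < pre x := by
    intro x y h
    induction h with
    | single h => exact step _ _ h
    | tail _ hs ih => exact lt_trans (step _ _ hs) ih
  intro x h
  exact lt_irrefl _ (key x x h)
end

section
/- There exists a family of instances of the tree augmentation problem on n vertices (n odd, n ≥ 3) for which the optimal acyclic orientation covers n − 2 vertices, while each of the two canonical orientations (all cross edges left-to-right, or all cross edges right-to-left, with back edges toward the root) covers only (n−1)/2 vertices. Hence the 1/2-approximation analysis is asymptotically tight. -/
lemma fin_ncard (n : ℕ) (P : ℕ → Prop) [DecidablePred P] :
    {v : Fin n | P v.val}.ncard = ((Finset.range n).filter P).card := by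
  rw [show {v : Fin n | P v.val} = ↑(Finset.univ.filter (fun v : Fin n => P v.val)) by
    ext v; simp]
  rw [Set.ncard_coe_finset]
  apply Finset.card_bij (fun a _ => a.val)
  · intro a ha; simp at ha ⊢; exact ha
  · intro a _ b _ h; exact Fin.ext h
  · intro x hx
    simp only [Finset.mem_filter, Finset.mem_range] at hx
    exact ⟨⟨x, hx.1⟩, by simp [hx.2], rfl⟩



/-- Tightness of the 1/2-approximation: for every odd `n ≥ 3` there is an
instance of tree augmentation on `n` vertices (a tree given by parent
function `p` rooted at `d`, a symmetric set `E` of non-tree edges, and a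
DFS pre-order `pre`) whose optimal acyclic orientation covers `n - 2`
vertices, while each of the two canonical orientations (back edges toward
the ancestor, cross edges all low-to-high pre-order, or all high-to-low)
covers only `(n - 1) / 2` vertices. -/
theorem stmt_11 :
    ∀ n : ℕ, Odd n → 3 ≤ n →
    ∃ (d : Fin n) (p : Fin n → Fin n) (E : Set (Fin n × Fin n)) (pre : Fin n → ℕ),
      p d = d ∧ (∀ v, ∃ m, p^[m] v = d) ∧ Function.Injective pre ∧
      (∀ e ∈ E, e.1 ≠ e.2) ∧ (∀ u v : Fin n, (u, v) ∈ E → (v, u) ∈ E) ∧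
      -- some feasible orientation of the non-tree edges covers n - 2 vertices
      (∃ o ⊆ E, (∀ u v : Fin n, (u, v) ∈ o → (v, u) ∉ o) ∧
        (∀ x, ¬ Relation.TransGen (fun a b => (a ≠ d ∧ p a = b) ∨ (a, b) ∈ o) x x) ∧
        {v : Fin n | ∃ w, (v, w) ∈ o}.ncard = n - 2) ∧
      -- and no feasible orientation covers more
      (∀ o ⊆ E, (∀ x, ¬ Relation.TransGen
          (fun a b => (a ≠ d ∧ p a = b) ∨ (a, b) ∈ o) x x) →
        {v : Fin n | ∃ w, (v, w) ∈ o}.ncard ≤ n - 2) ∧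
      -- the left-to-right canonical orientation covers (n-1)/2 vertices
      {v : Fin n | ∃ w, (v, w) ∈ E ∧
        ((v ≠ w ∧ ∃ m, p^[m] v = w) ∨
         (¬ (∃ m, p^[m] v = w) ∧ ¬ (∃ m, p^[m] w = v) ∧ pre v < pre w))}.ncard
        = (n - 1) / 2 ∧
      -- the right-to-left canonical orientation covers (n-1)/2 vertices
      {v : Fin n | ∃ w, (v, w) ∈ E ∧
        ((v ≠ w ∧ ∃ m, p^[m] v = w) ∨
         (¬ (∃ m, p^[m] v = w) ∧ ¬ (∃ m, p^[m] w = v) ∧ pre w < pre v))}.ncard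
        = (n - 1) / 2 := by
  intro n hodd hn3
  obtain ⟨k, hk⟩ := hodd
  have hn : 0 < n := by omega
  -- no vertex has a proper ancestor other than the root
  have hnoanc : ∀ v w : Fin n, w ≠ v → w.val ≠ 0 →
      ¬ ∃ m, (fun _ : Fin n => (⟨0, hn⟩ : Fin n))^[m] v = w := by
    rintro v w hwv hw0 ⟨m, hm⟩
    cases m with
    | zero => exact hwv (by simpa using hm.symm)
    | succ m =>
      rw [Function.iterate_succ_apply'] at hm
      exact hw0 (by rw [← hm])
  refine ⟨⟨0, hn⟩, fun _ => ⟨0, hn⟩,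
    {e : Fin n × Fin n | (e.1.val + 1 = e.2.val ∧ 1 ≤ e.1.val) ∨
      (e.2.val + 1 = e.1.val ∧ 1 ≤ e.2.val)},
    fun v => if v.val % 2 = 1 then v.val + n else v.val,
    rfl, fun v => ⟨1, rfl⟩, ?_, ?_, ?_, ?_, ?_, ?_, ?_⟩
  · -- pre injective
    intro a b hab
    simp only [] at hab
    have ha := a.isLt; have hb := b.isLt
    apply Fin.ext
    split_ifs at hab <;> omega
  · -- irreflexive edges
    intro e he h
    replace he : (e.1.val + 1 = e.2.val ∧ 1 ≤ e.1.val) ∨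
      (e.2.val + 1 = e.1.val ∧ 1 ≤ e.2.val) := he
    have := congrArg Fin.val h
    omega
  · -- symmetric
    intro u v h
    replace h : (u.val + 1 = v.val ∧ 1 ≤ u.val) ∨ (v.val + 1 = u.val ∧ 1 ≤ v.val) := h
    exact Or.symm h
  · -- exhibited orientation: all path edges left-to-right
    refine ⟨{e : Fin n × Fin n | e.1.val + 1 = e.2.val ∧ 1 ≤ e.1.val}, ?_, ?_, ?_, ?_⟩
    · intro e he
      exact Or.inl he
    · intro u v h1 h2
      replace h1 : u.val + 1 = v.val ∧ 1 ≤ u.val := h1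
      replace h2 : v.val + 1 = u.val ∧ 1 ≤ v.val := h2
      omega
    · -- acyclic via rank function
      intro x hx
      have step : ∀ a b : Fin n,
          ((a ≠ ⟨0, hn⟩ ∧ (fun _ : Fin n => (⟨0, hn⟩ : Fin n)) a = b) ∨
            (a, b) ∈ {e : Fin n × Fin n | e.1.val + 1 = e.2.val ∧ 1 ≤ e.1.val}) →
          (if a.val = 0 then n else a.val) < (if b.val = 0 then n else b.val) := by
        rintro a b (⟨had, hpab⟩ | hab)
        · have hb : b.val = 0 := by rw [← hpab]
          have ha0 : a.val ≠ 0 := fun h => had (Fin.ext h)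
          rw [if_neg ha0, if_pos hb]
          exact a.isLt
        · replace hab : a.val + 1 = b.val ∧ 1 ≤ a.val := hab
          have hb := b.isLt
          split_ifs <;> omega
      have mono : ∀ a b : Fin n,
          Relation.TransGen (fun a b : Fin n =>
            (a ≠ ⟨0, hn⟩ ∧ (fun _ : Fin n => (⟨0, hn⟩ : Fin n)) a = b) ∨
            (a, b) ∈ {e : Fin n × Fin n | e.1.val + 1 = e.2.val ∧ 1 ≤ e.1.val}) a b →
          (if a.val = 0 then n else a.val) < (if b.val = 0 then n else b.val) := by
        intro a b h
        induction h with
        | single h => exact step _ _ h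
        | tail _ h ih => exact lt_trans ih (step _ _ h)
      exact absurd (mono x x hx) (lt_irrefl _)
    · -- it covers n - 2 vertices
      have hset : {v : Fin n | ∃ w : Fin n,
          (v, w) ∈ {e : Fin n × Fin n | e.1.val + 1 = e.2.val ∧ 1 ≤ e.1.val}} =
          {v : Fin n | 1 ≤ v.val ∧ v.val + 1 < n} := by
        ext v
        simp only [Set.mem_setOf_eq]
        constructor
        · rintro ⟨w, hw⟩
          replace hw : v.val + 1 = w.val ∧ 1 ≤ v.val := hw
          have := w.isLt; exact ⟨hw.2, by omega⟩
        · rintro ⟨h1, h2⟩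
          exact ⟨⟨v.val + 1, h2⟩, ⟨rfl, h1⟩⟩
      rw [hset]
      have e1 : {v : Fin n | 1 ≤ v.val ∧ v.val + 1 < n}.ncard =
          ((Finset.range n).filter (fun x => 1 ≤ x ∧ x + 1 < n)).card :=
        fin_ncard n (fun x => 1 ≤ x ∧ x + 1 < n)
      rw [e1]
      have heq : (Finset.range n).filter (fun x => 1 ≤ x ∧ x + 1 < n) =
          Finset.Ioo 0 (n - 1) := by
        ext x
        simp only [Finset.mem_filter, Finset.mem_range, Finset.mem_Ioo]
        omega
      rw [heq, Nat.card_Ioo]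
      omega
  · -- optimality: no feasible orientation covers more than n - 2
    intro o ho hacyc
    by_cases hex : ∃ j : Fin n, 1 ≤ j.val ∧ ¬ ∃ w, (j, w) ∈ o
    · obtain ⟨j, hj1, hj2⟩ := hex
      have hsub : {v : Fin n | ∃ w, (v, w) ∈ o} ⊆
          {v : Fin n | v.val ≠ 0 ∧ v.val ≠ j.val} := by
        rintro v ⟨w, hw⟩
        have hvE := ho hw
        replace hvE : (v.val + 1 = w.val ∧ 1 ≤ v.val) ∨
          (w.val + 1 = v.val ∧ 1 ≤ w.val) := hvE
        refine ⟨by omega, ?_⟩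
        intro hvj
        exact hj2 ⟨w, (Fin.ext hvj : v = j) ▸ hw⟩
      have h1 := Set.ncard_le_ncard hsub (Set.toFinite _)
      have h2 : {v : Fin n | v.val ≠ 0 ∧ v.val ≠ j.val}.ncard = n - 2 := by
        have e1 : {v : Fin n | v.val ≠ 0 ∧ v.val ≠ j.val}.ncard =
            ((Finset.range n).filter (fun x => x ≠ 0 ∧ x ≠ j.val)).card :=
          fin_ncard n (fun x => x ≠ 0 ∧ x ≠ j.val)
        rw [e1]
        have heq : (Finset.range n).filter (fun x => x ≠ 0 ∧ x ≠ j.val) =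
            (Finset.range n) \ {0, j.val} := by
          ext x
          simp only [Finset.mem_filter, Finset.mem_range, Finset.mem_sdiff,
            Finset.mem_insert, Finset.mem_singleton]
          omega
        have hjlt := j.isLt
        rw [heq, Finset.card_sdiff_of_subset]
        · rw [Finset.card_range, Finset.card_insert_of_notMem (by simp; omega),
            Finset.card_singleton]
        · intro x hx
          simp only [Finset.mem_insert, Finset.mem_singleton] at hx
          simp only [Finset.mem_range]
          omega
      omega
    · exfalso
      push_neg at hex
      have hcyc2 : ∀ a b : Fin n, (a, b) ∈ o → (b, a) ∈ o → False := by
        intro a b h1 h2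
        exact hacyc a (Relation.TransGen.head (Or.inr h1)
          (Relation.TransGen.single (Or.inr h2)))
      have hex' : ∀ i : ℕ, 1 ≤ i → ∀ hi : i < n, ∃ w : Fin n,
          ((⟨i, hi⟩ : Fin n), w) ∈ o ∧
          (i + 1 = w.val ∨ (w.val + 1 = i ∧ 1 ≤ w.val)) := by
        intro i h1 hi
        obtain ⟨w, hw⟩ := hex ⟨i, hi⟩ h1
        have hadj := ho hw
        replace hadj : ((⟨i, hi⟩ : Fin n).val + 1 = w.val ∧ 1 ≤ (⟨i, hi⟩ : Fin n).val) ∨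
          (w.val + 1 = (⟨i, hi⟩ : Fin n).val ∧ 1 ≤ w.val) := hadj
        have hval : (⟨i, hi⟩ : Fin n).val = i := rfl
        exact ⟨w, hw, by omega⟩
      have key : ∀ i : ℕ, 1 ≤ i → ∀ h2 : i + 1 < n,
          ((⟨i, by omega⟩ : Fin n), (⟨i + 1, h2⟩ : Fin n)) ∈ o := by
        intro i
        induction i with
        | zero => intro h1 _; exact absurd h1 (by omega)
        | succ i ih =>
          intro _ h2
          obtain ⟨w, hw, hdisj⟩ := hex' (i + 1) (by omega) (by omega)
          rcases hdisj with hL | ⟨hR, hR1⟩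
          · have hwe : w = ⟨i + 1 + 1, h2⟩ := Fin.ext (show w.val = i + 1 + 1 by omega)
            rw [hwe] at hw
            exact hw
          · have hi1 : 1 ≤ i := by omega
            have hio := ih hi1 (by omega)
            have hwe : w = ⟨i, by omega⟩ := Fin.ext (show w.val = i by omega)
            rw [hwe] at hw
            exact absurd hio (fun h => hcyc2 _ _ h hw)
      obtain ⟨w, hw, hdisj⟩ := hex' (n - 1) (by omega) (by omega)
      have hwlt := w.isLt
      rcases hdisj with hL | ⟨hR, hR1⟩
      · omega
      · have hkey := key (n - 2) (by omega) (by omega)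
        have hwe : w = ⟨n - 2, by omega⟩ := Fin.ext (show w.val = n - 2 by omega)
        rw [hwe] at hw
        have he2 : ((⟨n - 2 + 1, by omega⟩ : Fin n)) = (⟨n - 1, by omega⟩ : Fin n) :=
          Fin.ext (show n - 2 + 1 = n - 1 by omega)
        rw [he2] at hkey
        exact hcyc2 _ _ hkey hw
  · -- left-to-right canonical covers the even leaves
    have hset : {v : Fin n | ∃ w,
        (v, w) ∈ {e : Fin n × Fin n | (e.1.val + 1 = e.2.val ∧ 1 ≤ e.1.val) ∨
          (e.2.val + 1 = e.1.val ∧ 1 ≤ e.2.val)} ∧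
        ((v ≠ w ∧ ∃ m, (fun _ : Fin n => (⟨0, hn⟩ : Fin n))^[m] v = w) ∨
         (¬ (∃ m, (fun _ : Fin n => (⟨0, hn⟩ : Fin n))^[m] v = w) ∧
          ¬ (∃ m, (fun _ : Fin n => (⟨0, hn⟩ : Fin n))^[m] w = v) ∧
          (fun v : Fin n => if v.val % 2 = 1 then v.val + n else v.val) v <
          (fun v : Fin n => if v.val % 2 = 1 then v.val + n else v.val) w))} =
        {v : Fin n | v.val ≠ 0 ∧ v.val % 2 = 0} := by
      ext v
      simp only [Set.mem_setOf_eq]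
      constructor
      · rintro ⟨w, hE', hor⟩
        replace hE' : (v.val + 1 = w.val ∧ 1 ≤ v.val) ∨
          (w.val + 1 = v.val ∧ 1 ≤ w.val) := hE'
        have hw0 : w.val ≠ 0 := by omega
        rcases hor with ⟨hne, hanc⟩ | ⟨_, _, hlt⟩
        · exact absurd hanc (hnoanc v w (fun h => hne h.symm) hw0)
        · refine ⟨by omega, ?_⟩
          replace hlt : (if v.val % 2 = 1 then v.val + n else v.val) <
            (if w.val % 2 = 1 then w.val + n else w.val) := hlt
          have hvlt := v.isLt; have hwlt := w.isLt
          split_ifs at hlt <;> omega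
      · rintro ⟨hv0, hv2⟩
        have hvn := v.isLt
        have h2v : 2 ≤ v.val := by omega
        refine ⟨⟨v.val - 1, by omega⟩, Or.inr ⟨show v.val - 1 + 1 = v.val by omega,
          show 1 ≤ v.val - 1 by omega⟩, Or.inr ⟨?_, ?_, ?_⟩⟩
        · exact hnoanc v ⟨v.val - 1, by omega⟩
            (Fin.ne_of_val_ne (show v.val - 1 ≠ v.val by omega))
            (show v.val - 1 ≠ 0 by omega)
        · exact hnoanc ⟨v.val - 1, by omega⟩ v
            (Fin.ne_of_val_ne (show v.val ≠ v.val - 1 by omega)) hv0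
        · show (if v.val % 2 = 1 then v.val + n else v.val) <
            (if (v.val - 1) % 2 = 1 then (v.val - 1) + n else v.val - 1)
          split_ifs <;> omega
    rw [hset]
    have e1 : {v : Fin n | v.val ≠ 0 ∧ v.val % 2 = 0}.ncard =
        ((Finset.range n).filter (fun x => x ≠ 0 ∧ x % 2 = 0)).card :=
      fin_ncard n (fun x => x ≠ 0 ∧ x % 2 = 0)
    rw [e1]
    have heq : (Finset.range n).filter (fun x => x ≠ 0 ∧ x % 2 = 0) =
        (Finset.range k).image (fun i => 2 * i + 2) := by
      ext x
      simp only [Finset.mem_filter, Finset.mem_range, Finset.mem_image]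
      constructor
      · rintro ⟨hx, hx0, hx2⟩
        exact ⟨x / 2 - 1, by omega, by omega⟩
      · rintro ⟨i, hi, rfl⟩
        omega
    rw [heq, Finset.card_image_of_injective _ (fun a b h => by omega),
      Finset.card_range]
    omega
  · -- right-to-left canonical covers the odd leaves
    have hset : {v : Fin n | ∃ w,
        (v, w) ∈ {e : Fin n × Fin n | (e.1.val + 1 = e.2.val ∧ 1 ≤ e.1.val) ∨
          (e.2.val + 1 = e.1.val ∧ 1 ≤ e.2.val)} ∧
        ((v ≠ w ∧ ∃ m, (fun _ : Fin n => (⟨0, hn⟩ : Fin n))^[m] v = w) ∨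
         (¬ (∃ m, (fun _ : Fin n => (⟨0, hn⟩ : Fin n))^[m] v = w) ∧
          ¬ (∃ m, (fun _ : Fin n => (⟨0, hn⟩ : Fin n))^[m] w = v) ∧
          (fun v : Fin n => if v.val % 2 = 1 then v.val + n else v.val) w <
          (fun v : Fin n => if v.val % 2 = 1 then v.val + n else v.val) v))} =
        {v : Fin n | v.val % 2 = 1} := by
      ext v
      simp only [Set.mem_setOf_eq]
      constructor
      · rintro ⟨w, hE', hor⟩
        replace hE' : (v.val + 1 = w.val ∧ 1 ≤ v.val) ∨
          (w.val + 1 = v.val ∧ 1 ≤ w.val) := hE'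
        have hw0 : w.val ≠ 0 := by omega
        rcases hor with ⟨hne, hanc⟩ | ⟨_, _, hlt⟩
        · exact absurd hanc (hnoanc v w (fun h => hne h.symm) hw0)
        · replace hlt : (if w.val % 2 = 1 then w.val + n else w.val) <
            (if v.val % 2 = 1 then v.val + n else v.val) := hlt
          have hvlt := v.isLt; have hwlt := w.isLt
          split_ifs at hlt <;> omega
      · intro hv2
        have hvlt := v.isLt
        have hlt' : v.val + 1 < n := by omega
        refine ⟨⟨v.val + 1, hlt'⟩, Or.inl ⟨rfl, show 1 ≤ v.val by omega⟩,
          Or.inr ⟨?_, ?_, ?_⟩⟩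
        · exact hnoanc v ⟨v.val + 1, hlt'⟩
            (Fin.ne_of_val_ne (show v.val + 1 ≠ v.val by omega))
            (show v.val + 1 ≠ 0 by omega)
        · exact hnoanc ⟨v.val + 1, hlt'⟩ v
            (Fin.ne_of_val_ne (show v.val ≠ v.val + 1 by omega))
            (show v.val ≠ 0 by omega)
        · show (if (v.val + 1) % 2 = 1 then (v.val + 1) + n else v.val + 1) <
            (if v.val % 2 = 1 then v.val + n else v.val)
          split_ifs <;> omega
    rw [hset]
    have e1 : {v : Fin n | v.val % 2 = 1}.ncard =
        ((Finset.range n).filter (fun x => x % 2 = 1)).card :=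
      fin_ncard n (fun x => x % 2 = 1)
    rw [e1]
    have heq : (Finset.range n).filter (fun x => x % 2 = 1) =
        (Finset.range k).image (fun i => 2 * i + 1) := by
      ext x
      simp only [Finset.mem_filter, Finset.mem_range, Finset.mem_image]
      constructor
      · rintro ⟨hx, hx2⟩
        exact ⟨x / 2, by omega, by omega⟩
      · rintro ⟨i, hi, rfl⟩
        omega
    rw [heq, Finset.card_image_of_injective _ (fun a b h => by omega),
      Finset.card_range]
    omega
end
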